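/- Let f be a homeomorphism of a compact metric space, let x be a non-periodic point, and suppose there exist ε > 0 and N ≥ 1 such that f^{kN}(f^l(x)) ∈ Γ_ε(f^l(x)) for all k ∈ ℤ and 0 ≤ l < N. Then any weak-* accumulation point μ of the uniform distributions on {x, f(x), ..., f^{n-1}(x)} (n → ∞) is an invariant measure satisfying μ(⋃_{l=0}^{N-1} Γ_ε(f^l(x))) = 1. -/

import Mathlib

open MeasureTheory Filter Metric Topology

variable {X : Type*}

/-- Iterate of a homeomorphism by an integer. -/
noncomputable def zit [TopologicalSpace X] (f : X ≃ₜ X) (i : ℤ) (x : X) : X :=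
  (f.toEquiv ^ i) x

/-- The dynamical ball `Γ_δ(x)` of a homeomorphism. -/
def Gamma [MetricSpace X] (f : X ≃ₜ X) (δ : ℝ) (x : X) : Set X :=
  {y | ∀ i : ℤ, dist (zit f i x) (zit f i y) ≤ δ}

/-- Shadowing property for one-sided (ℕ-indexed) pseudo-orbits. -/
def ShadowingN [MetricSpace X] (f : X → X) : Prop :=
  ∀ ε > (0 : ℝ), ∃ δ > (0 : ℝ), ∀ x : ℕ → X,
    (∀ i, dist (f (x i)) (x (i + 1)) < δ) →
    ∃ y, ∀ i, dist (f^[i] y) (x i) < ε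

/-- Shadowing property for two-sided (ℤ-indexed) pseudo-orbits of a homeomorphism. -/
def ShadowingZ [MetricSpace X] (f : X ≃ₜ X) : Prop :=
  ∀ ε > (0 : ℝ), ∃ δ > (0 : ℝ), ∀ x : ℤ → X,
    (∀ i, dist (f (x i)) (x (i + 1)) < δ) →
    ∃ y, ∀ i, dist (zit f i y) (x i) < ε

/-- Local weak specification property. -/
def LocalWeakSpec [MetricSpace X] (f : X → X) : Prop :=
  ∀ ε > (0 : ℝ), ∃ N : ℕ, ∃ δ > (0 : ℝ), ∀ n, N ≤ n → ∀ (k : ℕ) (x : ℕ → X),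
    (∀ i, i + 1 < k → dist (f^[n] (x i)) (x (i + 1)) < δ) →
    ∃ y, ∀ i < k, ∀ j, i * n ≤ j → j < (i + 1) * n →
      dist (f^[j] y) (f^[j - i * n] (x i)) < ε

/-- Local specification property (tracing point is periodic when the chain closes up). -/
def LocalSpec [MetricSpace X] (f : X → X) : Prop :=
  ∀ ε > (0 : ℝ), ∃ N : ℕ, ∃ δ > (0 : ℝ), ∀ n, N ≤ n → ∀ k, 1 ≤ k → ∀ x : ℕ → X,
    (∀ i < k, dist (f^[n] (x i)) (x ((i + 1) % k)) < δ) →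
    ∃ y, f^[k * n] y = y ∧ ∀ i < k, ∀ j, i * n ≤ j → j < (i + 1) * n →
      dist (f^[j] y) (f^[j - i * n] (x i)) < ε

/-- A point is periodic for `f`. -/
def IsPeriodicPt' (f : X → X) (y : X) : Prop := ∃ m, 1 ≤ m ∧ f^[m] y = y

/-- Periodic shadowing property for one-sided pseudo-orbits. -/
def PeriodicShadowingN [MetricSpace X] (f : X → X) : Prop :=
  ∀ ε > (0 : ℝ), ∃ δ > (0 : ℝ), ∀ x : ℕ → X,
    (∀ i, dist (f (x i)) (x (i + 1)) < δ) →
    (∃ M, 1 ≤ M ∧ ∀ i, x (i + M) = x i) →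
    ∃ y, IsPeriodicPt' f y ∧ ∀ i, dist (f^[i] y) (x i) < ε

/-- Periodic shadowing property for two-sided pseudo-orbits of a homeomorphism. -/
def PeriodicShadowingZ [MetricSpace X] (f : X ≃ₜ X) : Prop :=
  ∀ ε > (0 : ℝ), ∃ δ > (0 : ℝ), ∀ x : ℤ → X,
    (∀ i, dist (f (x i)) (x (i + 1)) < δ) →
    (∃ M : ℕ, 1 ≤ M ∧ ∀ i, x (i + M) = x i) →
    ∃ y, IsPeriodicPt' f y ∧ ∀ i, dist (zit f i y) (x i) < ε

/-- Strong periodic shadowing: the shadowing point has the same period as the pseudo-orbit. -/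
def StrongPeriodicShadowingZ [MetricSpace X] (f : X ≃ₜ X) : Prop :=
  ∀ ε > (0 : ℝ), ∃ δ > (0 : ℝ), ∀ (N : ℕ), 1 ≤ N → ∀ x : ℤ → X,
    (∀ i, dist (f (x i)) (x (i + 1)) < δ) →
    (∀ i, x (i + N) = x i) →
    ∃ y, f^[N] y = y ∧ ∀ i, dist (zit f i y) (x i) < ε

/-- Topological transitivity of a homeomorphism (some point has dense two-sided orbit). -/
def TransitiveZ [TopologicalSpace X] (f : X ≃ₜ X) : Prop :=
  ∃ x : X, Dense (Set.range fun n : ℤ => zit f n x)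

/-- Measure expansiveness of a homeomorphism. -/
def MeasExpansive [MetricSpace X] [MeasurableSpace X] (f : X ≃ₜ X) : Prop :=
  ∃ δ > (0 : ℝ), ∀ μ : Measure X, IsProbabilityMeasure μ →
    MeasurePreserving f μ μ → (∀ z : X, μ {z} = 0) →
    ∀ x : X, μ (Gamma f δ x) = 0

/-- Strong measure expansiveness of a homeomorphism. -/
def StrongMeasExpansive [MetricSpace X] [MeasurableSpace X] (f : X ≃ₜ X) : Prop :=
  ∃ δ > (0 : ℝ), ∀ μ : Measure X, IsProbabilityMeasure μ →
    MeasurePreserving f μ μ → ∀ x : X, μ (Gamma f δ x) = μ {x}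

/-- Strong measure expansiveness with a specified constant. -/
def StrongMeasExpansiveWith [MetricSpace X] [MeasurableSpace X] (f : X ≃ₜ X) (δ : ℝ) : Prop :=
  ∀ μ : Measure X, IsProbabilityMeasure μ →
    MeasurePreserving f μ μ → ∀ x : X, μ (Gamma f δ x) = μ {x}


/-! Shifting the starting point of an orbit by `f` changes a Birkhoff average of a bounded
function by `O(1/n)`, so every weak-* limit `μ` of the empirical measures integrates `g ∘ f`
and `g` alike, and is therefore `f`-invariant. The orbit lies in the closed set
`K = ⋃ l < N, Γ_ε(f^l x)`, so the averages of `infDist · K` vanish identically; hence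
`∫ infDist · K ∂μ = 0` and `μ K = 1`. -/

lemma zit_natCast [TopologicalSpace X] (f : X ≃ₜ X) (n : ℕ) (y : X) :
    zit f (n : ℤ) y = (⇑f)^[n] y := by
  simp only [zit, zpow_natCast, Equiv.Perm.coe_pow]
  rfl

lemma zit_eq_coe_zpow [TopologicalSpace X] (f : X ≃ₜ X) (i : ℤ) : zit f i = ⇑(f ^ i) := by
  let toPerm : (X ≃ₜ X) →* Equiv.Perm X := MonoidHom.mk' Homeomorph.toEquiv fun _ _ => rfl
  funext y
  exact congrArg (· y) (map_zpow toPerm f i).symm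

lemma continuous_zit [TopologicalSpace X] (f : X ≃ₜ X) (i : ℤ) : Continuous (zit f i) :=
  zit_eq_coe_zpow f i ▸ (f ^ i).continuous

lemma isClosed_Gamma [MetricSpace X] (f : X ≃ₜ X) (δ : ℝ) (x : X) : IsClosed (Gamma f δ x) := by
  simp only [Gamma, Set.ofPred_forall]
  exact isClosed_iInter fun i =>
    isClosed_le (continuous_const.dist (continuous_zit f i)) continuous_const

lemma iterate_mem_biUnion_of_iterate_mul_mem {α : Type*} {T : α → α} {x : α} {N : ℕ}
    (hN : 0 < N) {S : ℕ → Set α} (h : ∀ k : ℕ, ∀ l < N, T^[k * N] (T^[l] x) ∈ S l) (i : ℕ) :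
    T^[i] x ∈ ⋃ l ∈ Finset.range N, S l := by
  have hmod : i % N < N := Nat.mod_lt i hN
  have := h (i / N) (i % N) hmod
  rw [← Function.iterate_add_apply, Nat.div_add_mod'] at this
  exact Set.mem_biUnion (Finset.mem_range.2 hmod) this

lemma birkhoffAverage_comp_apply {α M : Type*} (R : Type*) [DivisionSemiring R] [AddCommMonoid M]
    [Module R M] (f : α → α) (g : α → M) (n : ℕ) (x : α) :
    birkhoffAverage R f (g ∘ f) n x = birkhoffAverage R f g n (f x) := by
  simp only [birkhoffAverage, birkhoffSum, Function.comp_apply, ← Function.iterate_succ_apply,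
    Function.iterate_succ_apply']

lemma tendsto_birkhoffAverage_apply_of_tendsto {α E : Type*} {𝕜 : Type*} [RCLike 𝕜]
    [NormedAddCommGroup E] [NormedSpace 𝕜 E] {T : α → α} {g : α → E}
    (hg : Bornology.IsBounded (Set.range g)) {φ : ℕ → ℕ} (hφ : Tendsto φ atTop atTop)
    {x : α} {a : E} (h : Tendsto (fun n => birkhoffAverage 𝕜 T g (φ n) x) atTop (𝓝 a)) :
    Tendsto (fun n => birkhoffAverage 𝕜 T g (φ n) (T x)) atTop (𝓝 a) := by
  simpa using ((tendsto_birkhoffAverage_apply_sub_birkhoffAverage' 𝕜 hg T x).comp hφ).add h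

section EmpiricalMeasures

variable [MeasurableSpace X] {T : X → X} {μ : Measure X} {φ : ℕ → ℕ} {x : X}

lemma integral_comp_eq_of_tendsto_birkhoffAverage [TopologicalSpace X] [CompactSpace X]
    (hT : Continuous T) (hφ : Tendsto φ atTop atTop)
    (h : ∀ g : C(X, ℝ), Tendsto (fun n => birkhoffAverage ℝ T g (φ n) x) atTop
      (𝓝 (∫ y, g y ∂μ)))
    (g : C(X, ℝ)) : ∫ y, g (T y) ∂μ = ∫ y, g y ∂μ := by
  refine tendsto_nhds_unique (h (g.comp ⟨T, hT⟩)) ?_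
  simp only [ContinuousMap.coe_comp, ContinuousMap.coe_mk, birkhoffAverage_comp_apply]
  exact tendsto_birkhoffAverage_apply_of_tendsto (isCompact_range g.continuous).isBounded hφ (h g)

lemma measurePreserving_of_integral_comp_eq [TopologicalSpace X] [HasOuterApproxClosed X]
    [BorelSpace X] [IsFiniteMeasure μ] (hT : Continuous T)
    (h : ∀ g : C(X, ℝ), ∫ y, g (T y) ∂μ = ∫ y, g y ∂μ) : MeasurePreserving T μ μ := by
  refine ⟨hT.measurable, ext_of_forall_integral_eq_of_IsFiniteMeasure fun g => ?_⟩
  rw [integral_map hT.aemeasurable g.continuous.aestronglyMeasurable]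
  exact h g.toContinuousMap

lemma ae_mem_of_integral_infDist_eq_zero [MetricSpace X] [OpensMeasurableSpace X] {K : Set X}
    (hK : IsClosed K) (hne : K.Nonempty) (hint : Integrable (infDist · K) μ)
    (h : ∫ y, infDist y K ∂μ = 0) : ∀ᵐ y ∂μ, y ∈ K := by
  filter_upwards [(integral_eq_zero_iff_of_nonneg (fun _ => infDist_nonneg) hint).1 h] with y hy
  exact (hK.mem_iff_infDist_zero hne).2 hy

lemma ae_mem_of_tendsto_birkhoffAverage [MetricSpace X] [CompactSpace X] [OpensMeasurableSpace X]
    [IsFiniteMeasure μ] {K : Set X} (hK : IsClosed K) (horbit : ∀ n, T^[n] x ∈ K)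
    (h : ∀ g : C(X, ℝ), Tendsto (fun n => birkhoffAverage ℝ T g (φ n) x) atTop
      (𝓝 (∫ y, g y ∂μ))) :
    ∀ᵐ y ∂μ, y ∈ K := by
  have hne : K.Nonempty := ⟨x, horbit 0⟩
  let d : C(X, ℝ) := ⟨(infDist · K), continuous_infDist_pt K⟩
  have hd_orbit : ∀ n, birkhoffAverage ℝ T d n x = 0 := fun n => by
    simp [birkhoffAverage, birkhoffSum, d, (hK.mem_iff_infDist_zero hne).1 (horbit _)]
  refine ae_mem_of_integral_infDist_eq_zero hK hne
    (d.continuous.integrable_of_hasCompactSupport (HasCompactSupport.of_compactSpace _)) ?_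
  refine tendsto_nhds_unique (h d) ?_
  simp only [hd_orbit, tendsto_const_nhds]

end EmpiricalMeasures

theorem accumulation_of_empirical_measures_invariant_and_supported_general
    [MetricSpace X] [CompactSpace X] [MeasurableSpace X] [BorelSpace X]
    (f : X ≃ₜ X) (x : X)
    (ε : ℝ) (N : ℕ) (hN : 1 ≤ N)
    (horb : ∀ k : ℤ, ∀ l < N, zit f (k * N) ((⇑f)^[l] x) ∈ Gamma f ε ((⇑f)^[l] x))
    (μ : Measure X) [IsProbabilityMeasure μ]
    (φ : ℕ → ℕ) (hφ : StrictMono φ)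
    (hconv : ∀ g : C(X, ℝ),
      Tendsto (fun n => (∑ i ∈ Finset.range (φ n), g ((⇑f)^[i] x)) / (φ n : ℝ))
        atTop (nhds (∫ y, g y ∂μ))) :
    MeasurePreserving f μ μ ∧ μ (⋃ l ∈ Finset.range N, Gamma f ε ((⇑f)^[l] x)) = 1 := by
  have havg : ∀ g : C(X, ℝ),
      Tendsto (fun n => birkhoffAverage ℝ f g (φ n) x) atTop (𝓝 (∫ y, g y ∂μ)) := by
    simpa only [birkhoffAverage, birkhoffSum, smul_eq_mul, div_eq_inv_mul] using hconv
  have horbit : ∀ n, (⇑f)^[n] x ∈ ⋃ l ∈ Finset.range N, Gamma f ε ((⇑f)^[l] x) :=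
    iterate_mem_biUnion_of_iterate_mul_mem hN fun k l hl => by
      simpa only [← Nat.cast_mul, zit_natCast] using horb k l hl
  have hclosed : IsClosed (⋃ l ∈ Finset.range N, Gamma f ε ((⇑f)^[l] x)) :=
    (Finset.range N).finite_toSet.isClosed_biUnion fun l _ => isClosed_Gamma f ε _
  exact ⟨measurePreserving_of_integral_comp_eq f.continuous
      (integral_comp_eq_of_tendsto_birkhoffAverage f.continuous hφ.tendsto_atTop havg),
    (prob_compl_eq_zero_iff hclosed.measurableSet).1
      (ae_mem_of_tendsto_birkhoffAverage hclosed horbit havg)⟩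

theorem accumulation_of_empirical_measures_invariant_and_supported
    [MetricSpace X] [CompactSpace X] [MeasurableSpace X] [BorelSpace X]
    (f : X ≃ₜ X) (x : X) (hx : ¬ IsPeriodicPt' (⇑f) x)
    (ε : ℝ) (hε : 0 < ε) (N : ℕ) (hN : 1 ≤ N)
    (horb : ∀ k : ℤ, ∀ l < N, zit f (k * N) ((⇑f)^[l] x) ∈ Gamma f ε ((⇑f)^[l] x))
    (μ : Measure X) [IsProbabilityMeasure μ]
    (φ : ℕ → ℕ) (hφ : StrictMono φ) (hφ1 : ∀ n, 1 ≤ φ n)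
    (hconv : ∀ g : C(X, ℝ),
      Tendsto (fun n => (∑ i ∈ Finset.range (φ n), g ((⇑f)^[i] x)) / (φ n : ℝ))
        atTop (nhds (∫ y, g y ∂μ))) :
    MeasurePreserving f μ μ ∧ μ (⋃ l ∈ Finset.range N, Gamma f ε ((⇑f)^[l] x)) = 1 :=
  accumulation_of_empirical_measures_invariant_and_supported_general f x ε N hN horb μ φ hφ hconv
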